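/- Let X and Y be complex Banach spaces with X nontrivial. If f ∈ A_b(B_X : Y) strongly attains its norm at x₀, then x₀ ∈ S_X (i.e., ‖x₀‖ = 1). -/

import Mathlib

open Metric Filter Topology Set

/-- The sup norm of a function over the closed unit ball. -/
noncomputable def supNorm {X Y : Type*} [NormedAddCommGroup X] [NormedAddCommGroup Y]
    (f : X → Y) : ℝ :=
  sSup ((fun x => ‖f x‖) '' Metric.closedBall (0 : X) 1)

/-- `f` strongly attains its (sup) norm at `x₀`: every maximizing sequence in the closed unit
ball has a subsequence converging to a unimodular multiple of `x₀`. -/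
def StronglyAttains (𝕂 : Type*) [RCLike 𝕂] {X Y : Type*} [NormedAddCommGroup X]
    [NormedSpace 𝕂 X] [NormedAddCommGroup Y] (f : X → Y) (x₀ : X) : Prop :=
  ∀ xs : ℕ → X, (∀ n, xs n ∈ Metric.closedBall (0 : X) 1) →
    Tendsto (fun n => ‖f (xs n)‖) atTop (nhds (supNorm f)) →
    ∃ (α : 𝕂) (φ : ℕ → ℕ), StrictMono φ ∧ ‖α‖ = 1 ∧
      Tendsto (fun n => xs (φ n)) atTop (nhds (α • x₀))

/-- The `k`-homogeneous polynomial associated to a continuous `k`-multilinear map. -/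
noncomputable def polyEval {𝕂 : Type*} [RCLike 𝕂] {X Y : Type*} [NormedAddCommGroup X]
    [NormedSpace 𝕂 X] [NormedAddCommGroup Y] [NormedSpace 𝕂 Y] {k : ℕ}
    (L : ContinuousMultilinearMap 𝕂 (fun _ : Fin k => X) Y) : X → Y :=
  fun x => L (fun _ => x)

/-- The set `ρ̃𝒫(ᵏX)` of points of the closed unit ball at which some nonzero bounded
`k`-homogeneous scalar polynomial strongly attains its norm. -/
def polyAttainPts (𝕂 : Type*) [RCLike 𝕂] (X : Type*) [NormedAddCommGroup X]
    [NormedSpace 𝕂 X] (k : ℕ) : Set X :=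
  {x₀ | x₀ ∈ Metric.closedBall (0 : X) 1 ∧
    ∃ L : ContinuousMultilinearMap 𝕂 (fun _ : Fin k => X) 𝕂,
      polyEval L ≠ 0 ∧ StronglyAttains 𝕂 (polyEval L) x₀}

/-- Numerical radius `v(f) = sup { |x*(f x)| : (x, x*) ∈ Π(X) }`. -/
noncomputable def numRadius (𝕂 : Type*) [RCLike 𝕂] {X : Type*} [NormedAddCommGroup X]
    [NormedSpace 𝕂 X] (f : X → X) : ℝ :=
  sSup {r | ∃ (x : X) (x' : X →L[𝕂] 𝕂), ‖x‖ = 1 ∧ ‖x'‖ = 1 ∧ x' x = 1 ∧ r = ‖x' (f x)‖}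

/-- The `k`-polynomial numerical index `n^(k)(X)`. -/
noncomputable def polyNumIndex (𝕂 : Type*) [RCLike 𝕂] (X : Type*) [NormedAddCommGroup X]
    [NormedSpace 𝕂 X] (k : ℕ) : ℝ :=
  sInf {r | ∃ L : ContinuousMultilinearMap 𝕂 (fun _ : Fin k => X) X,
    supNorm (polyEval L) = 1 ∧ r = numRadius 𝕂 (polyEval L)}

/-- The numerical index `n(X)` of a Banach space. -/
noncomputable def numIndex (𝕂 : Type*) [RCLike 𝕂] (X : Type*) [NormedAddCommGroup X]
    [NormedSpace 𝕂 X] : ℝ :=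
  sInf {r | ∃ T : X →L[𝕂] X, ‖T‖ = 1 ∧ r = numRadius 𝕂 (⇑T)}

/-- `x` is an extreme point of the convex set `s` : `y + z = 2x` with `y, z ∈ s` forces
`y = z = x`. -/
def IsExtremePt {E : Type*} [AddCommGroup E] (s : Set E) (x : E) : Prop :=
  x ∈ s ∧ ∀ y ∈ s, ∀ z ∈ s, y + z = x + x → y = x ∧ z = x

/-- `x` is a strongly exposed point of the closed unit ball. -/
def StronglyExposedPt (𝕂 : Type*) [RCLike 𝕂] {X : Type*} [NormedAddCommGroup X]
    [NormedSpace 𝕂 X] (x : X) : Prop :=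
  x ∈ Metric.closedBall (0 : X) 1 ∧ ∃ x' : X →L[𝕂] 𝕂, x' ≠ 0 ∧ ‖x'‖ ≤ 1 ∧
    (∀ y ∈ Metric.closedBall (0 : X) 1, RCLike.re (x' y) ≤ RCLike.re (x' x)) ∧
    ∀ xs : ℕ → X, (∀ n, xs n ∈ Metric.closedBall (0 : X) 1) →
      Tendsto (fun n => RCLike.re (x' (xs n))) atTop (nhds (RCLike.re (x' x))) →
      Tendsto xs atTop (nhds x)

/-- `x'` is a weak-* exposed point of the dual unit ball. -/
def WeakStarExposed (𝕂 : Type*) [RCLike 𝕂] {X : Type*} [NormedAddCommGroup X]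
    [NormedSpace 𝕂 X] (x' : X →L[𝕂] 𝕂) : Prop :=
  ‖x'‖ ≤ 1 ∧ ∃ x ∈ Metric.closedBall (0 : X) 1, x' x = 1 ∧
    ∀ y' : X →L[𝕂] 𝕂, ‖y'‖ ≤ 1 → y' x = 1 → y' = x'

/-- `f` is a strong peak function at `x₀`: `f` is nonzero on the ball and every maximizing
sequence in the closed unit ball converges to `x₀`. -/
def StrongPeakAt {X Y : Type*} [NormedAddCommGroup X] [NormedAddCommGroup Y]
    (f : X → Y) (x₀ : X) : Prop :=
  (∃ x ∈ Metric.closedBall (0 : X) 1, f x ≠ 0) ∧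
    ∀ xs : ℕ → X, (∀ n, xs n ∈ Metric.closedBall (0 : X) 1) →
      Tendsto (fun n => ‖f (xs n)‖) atTop (nhds (supNorm f)) →
      Tendsto xs atTop (nhds x₀)

/-- Complex extreme point of the closed unit ball. -/
def ComplexExtremePoint {X : Type*} [NormedAddCommGroup X] [NormedSpace ℂ X] (x : X) : Prop :=
  x ∈ Metric.closedBall (0 : X) 1 ∧
    ∀ y : X, (∀ θ : ℝ, ‖x + Complex.exp (θ * Complex.I) • y‖ ≤ 1) → y = 0

/-- Membership in `A_b(B_X : Y)`: bounded, continuous on the closed unit ball and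
holomorphic on the open unit ball. -/
def MemAb {X Y : Type*} [NormedAddCommGroup X] [NormedSpace ℂ X] [NormedAddCommGroup Y]
    [NormedSpace ℂ Y] (f : X → Y) : Prop :=
  ContinuousOn f (Metric.closedBall (0 : X) 1) ∧
    (∃ C, ∀ x ∈ Metric.closedBall (0 : X) 1, ‖f x‖ ≤ C) ∧
    DifferentiableOn ℂ f (Metric.ball (0 : X) 1)

/-- Membership in `A_u(B_X : Y)`: additionally uniformly continuous on the closed ball. -/
def MemAu {X Y : Type*} [NormedAddCommGroup X] [NormedSpace ℂ X] [NormedAddCommGroup Y]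
    [NormedSpace ℂ Y] (f : X → Y) : Prop :=
  MemAb f ∧ UniformContinuousOn f (Metric.closedBall (0 : X) 1)

/-- The set `ρA_u(B_X)` of strong peak points of `A_u(B_X)`. -/
def strongPeakPtsAu (X : Type*) [NormedAddCommGroup X] [NormedSpace ℂ X] : Set X :=
  {x₀ | ∃ f : X → ℂ, MemAu f ∧ StrongPeakAt f x₀}

/-- The holomorphic numerical index `n_u(X)`. -/
noncomputable def holNumIndex (X : Type*) [NormedAddCommGroup X] [NormedSpace ℂ X] : ℝ :=
  sInf {r | ∃ f : X → X, MemAu f ∧ supNorm f = 1 ∧ r = numRadius ℂ f}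

/-! A maximizing sequence has a subsequence converging to some `α • x₀` with `|α| = 1`, so `f`
attains its norm at a point of norm `‖x₀‖`, and conversely every point where `f` attains its norm
(a constant maximizing sequence) has norm `‖x₀‖`. If `‖x₀‖ < 1`, the maximum modulus principle
makes `‖f‖` constant on the open ball, so `0` and a point of norm `1/2` would both have norm
`‖x₀‖`. -/

section StronglyAttains

variable {𝕂 X Y : Type*} [RCLike 𝕂] [NormedAddCommGroup X] [NormedSpace 𝕂 X]
  [NormedAddCommGroup Y] {f : X → Y} {x₀ : X}

theorem norm_le_supNorm (hbdd : BddAbove ((fun x => ‖f x‖) '' closedBall (0 : X) 1)) {x : X}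
    (hx : x ∈ closedBall (0 : X) 1) : ‖f x‖ ≤ supNorm f :=
  le_csSup hbdd ⟨x, hx, rfl⟩

theorem exists_seq_tendsto_supNorm (hbdd : BddAbove ((fun x => ‖f x‖) '' closedBall (0 : X) 1)) :
    ∃ xs : ℕ → X, (∀ n, xs n ∈ closedBall (0 : X) 1) ∧
      Tendsto (fun n => ‖f (xs n)‖) atTop (𝓝 (supNorm f)) := by
  have hne : ((fun x => ‖f x‖) '' closedBall (0 : X) 1).Nonempty :=
    ⟨‖f 0‖, 0, mem_closedBall_self zero_le_one, rfl⟩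
  obtain ⟨u, -, hu, hmem⟩ := exists_seq_tendsto_sSup hne hbdd
  choose xs hxs hfxs using hmem
  exact ⟨xs, hxs, by simpa only [supNorm, hfxs] using hu⟩

theorem StronglyAttains.norm_eq_of_norm_eq_supNorm (hatt : StronglyAttains 𝕂 f x₀) {z : X}
    (hz : z ∈ closedBall (0 : X) 1) (hfz : ‖f z‖ = supNorm f) : ‖z‖ = ‖x₀‖ := by
  obtain ⟨α, φ, -, hα, hlim⟩ := hatt (fun _ => z) (fun _ => hz) (by simp [hfz])
  rw [tendsto_nhds_unique tendsto_const_nhds hlim, norm_smul, hα, one_mul]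

theorem StronglyAttains.exists_norm_eq_supNorm (hatt : StronglyAttains 𝕂 f x₀)
    (hcont : ContinuousOn f (closedBall (0 : X) 1))
    (hbdd : BddAbove ((fun x => ‖f x‖) '' closedBall (0 : X) 1)) :
    ∃ z ∈ closedBall (0 : X) 1, ‖z‖ = ‖x₀‖ ∧ ‖f z‖ = supNorm f := by
  obtain ⟨xs, hxs, hmax⟩ := exists_seq_tendsto_supNorm hbdd
  obtain ⟨α, φ, hφ, hα, hlim⟩ := hatt xs hxs hmax
  have hmem : α • x₀ ∈ closedBall (0 : X) 1 :=
    isClosed_closedBall.mem_of_tendsto hlim (Eventually.of_forall fun n => hxs (φ n))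
  have hlim' : Tendsto (fun n => xs (φ n)) atTop (𝓝[closedBall (0 : X) 1] (α • x₀)) :=
    tendsto_nhdsWithin_of_tendsto_nhds_of_eventually_within _ hlim
      (Eventually.of_forall fun n => hxs (φ n))
  have hf_lim : Tendsto (fun n => ‖f (xs (φ n))‖) atTop (𝓝 ‖f (α • x₀)‖) :=
    ((hcont _ hmem).tendsto.comp hlim').norm
  exact ⟨α • x₀, hmem, by rw [norm_smul, hα, one_mul],
    tendsto_nhds_unique hf_lim (hmax.comp hφ.tendsto_atTop)⟩

end StronglyAttains

theorem statement12_general {X Y : Type*} [NormedAddCommGroup X] [NormedSpace ℂ X]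
    [NormedAddCommGroup Y] [NormedSpace ℂ Y] [Nontrivial X]
    (f : X → Y) (hf : MemAb f)
    (x₀ : X) (hatt : StronglyAttains ℂ f x₀) : ‖x₀‖ = 1 := by
  obtain ⟨hcont, ⟨C, hC⟩, hdiff⟩ := hf
  have hbdd : BddAbove ((fun x => ‖f x‖) '' closedBall (0 : X) 1) :=
    ⟨C, by rintro _ ⟨x, hx, rfl⟩; exact hC x hx⟩
  obtain ⟨z, hz, hzx₀, hfz⟩ := hatt.exists_norm_eq_supNorm hcont hbdd
  refine le_antisymm (hzx₀ ▸ mem_closedBall_zero_iff.mp hz) (not_lt.mp fun hlt => ?_)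
  have hzball : z ∈ ball (0 : X) 1 := mem_ball_zero_iff.mpr (hzx₀ ▸ hlt)
  have hmax : IsMaxOn (norm ∘ f) (ball (0 : X) 1) z := fun y hy =>
    (norm_le_supNorm hbdd (ball_subset_closedBall hy)).trans hfz.ge
  have hconst := Complex.norm_eqOn_of_isPreconnected_of_isMaxOn
    (convex_ball (0 : X) 1).isPreconnected isOpen_ball hdiff hzball hmax
  have hnorm : ∀ y ∈ ball (0 : X) 1, ‖y‖ = ‖x₀‖ := fun y hy =>
    hatt.norm_eq_of_norm_eq_supNorm (ball_subset_closedBall hy) ((hconst hy).trans hfz)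
  obtain ⟨w, hw⟩ := exists_norm_eq X (by norm_num : (0 : ℝ) ≤ 1 / 2)
  have h0 := hnorm 0 (mem_ball_self one_pos)
  have hw' := hnorm w (mem_ball_zero_iff.mpr (by rw [hw]; norm_num))
  rw [norm_zero] at h0
  linarith

/-- if `X` is nontrivial and a nonzero `f ∈ A_b(B_X : Y)` strongly attains its
norm at `x₀`, then `x₀` lies on the unit sphere. -/
theorem statement12 {X Y : Type*} [NormedAddCommGroup X] [NormedSpace ℂ X] [CompleteSpace X]
    [NormedAddCommGroup Y] [NormedSpace ℂ Y] [CompleteSpace Y] [Nontrivial X]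
    (f : X → Y) (hf : MemAb f) (hfne : ∃ x ∈ Metric.closedBall (0 : X) 1, f x ≠ 0)
    (x₀ : X) (hatt : StronglyAttains ℂ f x₀) : ‖x₀‖ = 1 :=
  statement12_general f hf x₀ hatt
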